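/- Let n ≥ 2. In ℝ^{n} with standard basis e_1, …, e_{n}, set α_i = e_i − e_{i+1} for 1 ≤ i ≤ n−1, α_n = e_n, θ = e_1 + e_2, and c = r_θ ∘ r_{α_1} ∘ ⋯ ∘ r_{α_n} (with r_{α_n} applied first and r_θ last). Then c(e_1) = −e_1, c(e_i) = e_{i+1} for 2 ≤ i ≤ n−1, and c(e_n) = e_2; moreover the fixed-point space {v ∈ ℝ^n : c(v) = v} is the one-dimensional subspace spanned by e_2 + ⋯ + e_n. -/

import Mathlib

/-!
The simple reflections act on coordinates: `r_{e_i - e_{i+1}}` swaps `x_i` and `x_{i+1}` and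
`r_{e_n}` negates `x_n`, so `r_{α_1} ∘ ⋯ ∘ r_{α_n}` is the signed cyclic shift
`x ↦ (-x_n, x_1, …, x_{n-1})`. The reflection `r_θ` swaps and negates the first two coordinates,
hence `c x = (-x_1, x_n, x_2, …, x_{n-1})`. The images of the basis vectors can be read off, and
`c x = x` says exactly that `x_1 = 0` and `x_2 = ⋯ = x_n`.
-/

open Finset

/-- The orthogonal reflection `r_a(x) = x - (2⟨x,a⟩/⟨a,a⟩)·a` in a nonzero
vector `a` of Euclidean space. -/
noncomputable def reflect {m : ℕ} (a : EuclideanSpace ℝ (Fin m))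
    (x : EuclideanSpace ℝ (Fin m)) : EuclideanSpace ℝ (Fin m) :=
  x - ((2 * (inner ℝ x a : ℝ) / (inner ℝ a a : ℝ)) • a)

/-- The standard basis vector `e i` of Euclidean space `ℝ^m`. -/
noncomputable def stdVec (m : ℕ) (i : Fin m) : EuclideanSpace ℝ (Fin m) :=
  EuclideanSpace.single i 1

section Reflection

variable {m : ℕ}

lemma stdVec_apply (i j : Fin m) : stdVec m i j = if j = i then 1 else 0 :=
  PiLp.single_apply 2 ℝ i 1 j

lemma inner_stdVec_right (x : EuclideanSpace ℝ (Fin m)) (i : Fin m) :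
    inner ℝ x (stdVec m i) = x i := by
  simp [stdVec, EuclideanSpace.inner_single_right]

lemma reflect_apply (a x : EuclideanSpace ℝ (Fin m)) (j : Fin m) :
    reflect a x j = x j - 2 * inner ℝ x a / inner ℝ a a * a j := by
  simp [reflect]

lemma reflect_stdVec_apply (a : Fin m) (x : EuclideanSpace ℝ (Fin m)) (j : Fin m) :
    reflect (stdVec m a) x j = if j = a then -x a else x j := by
  simp only [reflect_apply, inner_stdVec_right, stdVec_apply, if_true]
  split_ifs with h
  · subst h; ring
  · ring

lemma reflect_stdVec_sub_stdVec_apply {a b : Fin m} (hab : a ≠ b)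
    (x : EuclideanSpace ℝ (Fin m)) (j : Fin m) :
    reflect (stdVec m a - stdVec m b) x j =
      if j = a then x b else if j = b then x a else x j := by
  simp only [reflect_apply, inner_sub_right, inner_sub_left, inner_stdVec_right, PiLp.sub_apply,
    stdVec_apply, if_pos, hab, hab.symm, if_false]
  split_ifs with ha hb <;> subst_vars <;> first | exact absurd rfl hab | ring

lemma reflect_stdVec_add_stdVec_apply {a b : Fin m} (hab : a ≠ b)
    (x : EuclideanSpace ℝ (Fin m)) (j : Fin m) :
    reflect (stdVec m a + stdVec m b) x j =
      if j = a then -x b else if j = b then -x a else x j := by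
  simp only [reflect_apply, inner_add_right, inner_add_left, inner_stdVec_right, PiLp.add_apply,
    stdVec_apply, if_pos, hab, hab.symm, if_false]
  split_ifs with ha hb <;> subst_vars <;> first | exact absurd rfl hab | ring

end Reflection

noncomputable def simpleRootB (n : ℕ) (i : Fin n) : EuclideanSpace ℝ (Fin n) :=
  if h : (i : ℕ) + 1 < n then stdVec n i - stdVec n ⟨(i : ℕ) + 1, h⟩ else stdVec n i

noncomputable def simpleReflectionsFrom (n k : ℕ) :
    EuclideanSpace ℝ (Fin n) → EuclideanSpace ℝ (Fin n) :=
  ((List.ofFn fun i => reflect (simpleRootB n i)).drop k).foldr (· ∘ ·) id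

lemma simpleReflectionsFrom_eq_comp {n k : ℕ} (hk : k < n) :
    simpleReflectionsFrom n k =
      reflect (simpleRootB n ⟨k, hk⟩) ∘ simpleReflectionsFrom n (k + 1) := by
  rw [simpleReflectionsFrom, List.drop_eq_getElem_cons (by simpa using hk)]
  simp [simpleReflectionsFrom]

lemma simpleReflectionsFrom_self (n : ℕ) : simpleReflectionsFrom n n = id := by
  simp [simpleReflectionsFrom, List.drop_of_length_le]

lemma simpleReflectionsFrom_apply {n k : ℕ} (hk : k < n) (x : EuclideanSpace ℝ (Fin n))
    (j : Fin n) :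
    simpleReflectionsFrom n k x j =
      if (j : ℕ) < k then x j
      else if (j : ℕ) = k then -x ⟨n - 1, by omega⟩
      else x ⟨j - 1, by omega⟩ := by
  induction hd : n - 1 - k generalizing k j with
  | zero =>
    have hk' : k = n - 1 := by omega
    subst hk'
    rw [simpleReflectionsFrom_eq_comp hk, Nat.sub_add_cancel (by omega), simpleReflectionsFrom_self,
      simpleRootB, dif_neg (by dsimp only; omega), Function.comp_apply, reflect_stdVec_apply]
    simp only [id, Fin.ext_iff]
    split_ifs <;> first | rfl | omega
  | succ d ih =>
    have hk1 : k + 1 < n := by omega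
    rw [simpleReflectionsFrom_eq_comp hk, simpleRootB, dif_pos hk1, Function.comp_apply,
      reflect_stdVec_sub_stdVec_apply (by simp)]
    have ih' := fun j => ih hk1 j (by omega)
    simp only [ih', Fin.ext_iff]
    split_ifs <;> first | rfl | omega | exact congrArg x.ofLp (Fin.ext (by simp; omega))

noncomputable def coxeterLinearB (n : ℕ) (hn : 1 < n) :
    EuclideanSpace ℝ (Fin n) → EuclideanSpace ℝ (Fin n) :=
  reflect (stdVec n ⟨0, by omega⟩ + stdVec n ⟨1, by omega⟩) ∘ simpleReflectionsFrom n 0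

lemma coxeterLinearB_apply {n : ℕ} (hn : 1 < n) (x : EuclideanSpace ℝ (Fin n)) (j : Fin n) :
    coxeterLinearB n hn x j =
      if (j : ℕ) = 0 then -x ⟨0, by omega⟩
      else if (j : ℕ) = 1 then x ⟨n - 1, by omega⟩
      else x ⟨j - 1, by omega⟩ := by
  rw [coxeterLinearB, Function.comp_apply, reflect_stdVec_add_stdVec_apply (by simp)]
  simp only [simpleReflectionsFrom_apply (by omega : 0 < n), Fin.ext_iff]
  split_ifs <;> first | rfl | omega | contradiction | exact neg_neg _

lemma coxeterLinearB_stdVec_zero {n : ℕ} (hn : 1 < n) :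
    coxeterLinearB n hn (stdVec n ⟨0, by omega⟩) = -stdVec n ⟨0, by omega⟩ := by
  ext j
  simp only [coxeterLinearB_apply, PiLp.neg_apply, stdVec_apply, Fin.ext_iff]
  split_ifs <;> first | omega | norm_num

lemma coxeterLinearB_stdVec_of_lt {n : ℕ} (hn : 1 < n) {j : ℕ} (hj : 1 ≤ j) (hjn : j + 1 < n) :
    coxeterLinearB n hn (stdVec n ⟨j, by omega⟩) = stdVec n ⟨j + 1, by omega⟩ := by
  ext k
  simp only [coxeterLinearB_apply, stdVec_apply, Fin.ext_iff]
  split_ifs <;> first | omega | norm_num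

lemma coxeterLinearB_stdVec_last {n : ℕ} (hn : 1 < n) :
    coxeterLinearB n hn (stdVec n ⟨n - 1, by omega⟩) = stdVec n ⟨1, by omega⟩ := by
  ext k
  simp only [coxeterLinearB_apply, stdVec_apply, Fin.ext_iff]
  split_ifs <;> first | omega | norm_num

lemma sum_stdVec_sub_stdVec_apply {m : ℕ} (i j : Fin m) :
    ((∑ k, stdVec m k) - stdVec m i) j = if j = i then 0 else 1 := by
  simp only [PiLp.sub_apply, WithLp.ofLp_sum, Finset.sum_apply, stdVec_apply, sum_ite_eq, mem_univ,
    if_true]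
  split_ifs <;> norm_num

lemma coxeterLinearB_eq_self_iff {n : ℕ} (hn : 1 < n) (x : EuclideanSpace ℝ (Fin n)) :
    coxeterLinearB n hn x = x ↔
      ∃ t : ℝ, x = t • ((∑ i : Fin n, stdVec n i) - stdVec n ⟨0, by omega⟩) := by
  constructor
  · intro hfix
    have hcoord : ∀ j, coxeterLinearB n hn x j = x j := fun j => by rw [hfix]
    have hzero : x ⟨0, by omega⟩ = 0 := by
      have h := hcoord ⟨0, by omega⟩
      rw [coxeterLinearB_apply, if_pos rfl] at h
      linarith
    have hconst : ∀ j (hj : j < n), 1 ≤ j → x ⟨j, hj⟩ = x ⟨1, by omega⟩ := by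
      intro j hj h1
      induction j, h1 using Nat.le_induction with
      | base => rfl
      | succ j h1 ih =>
        have h := hcoord ⟨j + 1, hj⟩
        rw [coxeterLinearB_apply, if_neg (by dsimp only; omega), if_neg (by dsimp only; omega)] at h
        rw [← h]
        exact ih (by omega)
    refine ⟨x ⟨1, by omega⟩, ?_⟩
    ext ⟨j, hj⟩
    simp only [PiLp.smul_apply, smul_eq_mul, sum_stdVec_sub_stdVec_apply, Fin.mk.injEq]
    rcases Nat.eq_zero_or_pos j with rfl | hpos
    · rw [hzero, if_pos rfl, mul_zero]
    · rw [hconst j hj hpos, if_neg hpos.ne', mul_one]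
  · rintro ⟨t, rfl⟩
    ext j
    simp only [coxeterLinearB_apply, PiLp.smul_apply, smul_eq_mul, sum_stdVec_sub_stdVec_apply,
      Fin.ext_iff]
    split_ifs <;> first | omega | ring

/-- Type `B_n`, `n ≥ 2`, untwisted case: with simple roots
`α_i = e_i - e_{i+1}` (`i < n-1`, 0-based), `α_n = e_{n-1}`, and highest root
`θ = e_0 + e_1`, the linear part `c = r_θ ∘ r_{α_1} ∘ ⋯ ∘ r_{α_n}` of the affine
Coxeter element satisfies `c e_0 = -e_0`, `c e_j = e_{j+1}` for `1 ≤ j ≤ n-2`,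
`c e_{n-1} = e_1`, and its fixed-point space is the line spanned by
`e_1 + ⋯ + e_{n-1}` (0-based), i.e. `(Σ_i e_i) - e_0`. -/
theorem coxeterB_action_and_fixed_space (n : ℕ) (hn : 2 ≤ n)
    (c : EuclideanSpace ℝ (Fin n) → EuclideanSpace ℝ (Fin n))
    (hc : c = reflect (stdVec n ⟨0, by omega⟩ + stdVec n ⟨1, by omega⟩) ∘
      (List.ofFn fun i : Fin n =>
        reflect (if h : (i : ℕ) + 1 < n then stdVec n i - stdVec n ⟨(i : ℕ) + 1, h⟩
          else stdVec n i)).foldr (· ∘ ·) id) :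
    c (stdVec n ⟨0, by omega⟩) = -stdVec n ⟨0, by omega⟩ ∧
    (∀ j : ℕ, ∀ _ : 1 ≤ j, ∀ _ : j + 2 ≤ n,
        c (stdVec n ⟨j, by omega⟩) = stdVec n ⟨j + 1, by omega⟩) ∧
    c (stdVec n ⟨n - 1, by omega⟩) = stdVec n ⟨1, by omega⟩ ∧
    (∀ x : EuclideanSpace ℝ (Fin n), c x = x ↔
      ∃ t : ℝ, x = t • ((∑ i : Fin n, stdVec n i) - stdVec n ⟨0, by omega⟩)) := by
  -- `List.drop 0` reduces away, so `hc` is the defining equation of `coxeterLinearB`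
  obtain rfl : c = coxeterLinearB n hn := hc
  exact ⟨coxeterLinearB_stdVec_zero hn, fun _ hj hjn => coxeterLinearB_stdVec_of_lt hn hj hjn,
    coxeterLinearB_stdVec_last hn, coxeterLinearB_eq_self_iff hn⟩
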